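/- The map ρ: ℂ³ → ℝ⁴ given by ρ(z₁,z₂,z₃) = (ν₁, ν₂, ν₃, μ), where ν₁ + iμ = −conj(z₁z₂z₃), ν₂ = ½(|z₂|² − |z₃|²), and ν₃ = −½(|z₁|² − |z₃|²), is T²-invariant, and the induced map from the orbit space ℂ³/T² to ℝ⁴ is a homeomorphism. -/

import Mathlib

/-- The action of `(θ, φ) ∈ T²` on `ℂ³`,
`(e^{iθ}, e^{iφ})·(z₁,z₂,z₃) = (e^{iθ}z₁, e^{iφ}z₂, e^{−i(θ+φ)}z₃)`. -/
noncomputable def torusAct (θ φ : ℝ) (z : ℂ × ℂ × ℂ) : ℂ × ℂ × ℂ :=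
  (Complex.exp (θ * Complex.I) * z.1,
   Complex.exp (φ * Complex.I) * z.2.1,
   Complex.exp (-(θ + φ) * Complex.I) * z.2.2)

/-- The orbit equivalence relation of the `T²`-action on `ℂ³`. -/
noncomputable def torusSetoid : Setoid (ℂ × ℂ × ℂ) where
  r z w := ∃ θ φ : ℝ, w = torusAct θ φ z
  iseqv := by
    constructor
    · exact fun z => ⟨0, 0, by simp [torusAct]⟩
    · rintro z w ⟨θ, φ, rfl⟩
      refine ⟨-θ, -φ, ?_⟩
      refine Prod.ext ?_ (Prod.ext ?_ ?_) <;>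
        · simp only [torusAct, ← mul_assoc, ← Complex.exp_add]
          push_cast
          ring_nf
          simp
    · rintro z w v ⟨θ, φ, rfl⟩ ⟨θ', φ', rfl⟩
      refine ⟨θ + θ', φ + φ', ?_⟩
      refine Prod.ext ?_ (Prod.ext ?_ ?_) <;>
        · simp only [torusAct, ← mul_assoc, ← Complex.exp_add]
          push_cast
          ring_nf

/-- The multi-moment map `ρ = (ν₁, ν₂, ν₃, μ) : ℂ³ → ℝ⁴`, where
`ν₁ + iμ = −conj(z₁z₂z₃)`, `ν₂ = ½(|z₂|² − |z₃|²)`, `ν₃ = −½(|z₁|² − |z₃|²)`. -/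
noncomputable def rhoMap (z : ℂ × ℂ × ℂ) : Fin 4 → ℝ :=
  ![(-(starRingEnd ℂ) (z.1 * z.2.1 * z.2.2)).re,
    (‖z.2.1‖ ^ 2 - ‖z.2.2‖ ^ 2) / 2,
    -(‖z.1‖ ^ 2 - ‖z.2.2‖ ^ 2) / 2,
    (-(starRingEnd ℂ) (z.1 * z.2.1 * z.2.2)).im]

/-!
Up to the torus action, a point of `ℂ³` is determined by the moduli `|zᵢ|` and the invariant
`p = z₁z₂z₃`: a vanishing coordinate leaves its phase free, otherwise the phases are forced by `p`.
The map `ρ` records `p` and the differences `a = |z₁|² - |z₃|²`, `b = |z₂|² - |z₃|²`, and with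
`t = |z₃|²` one has `|p|² = t (t + a) (t + b)`. This cubic is strictly increasing on the admissible
range `t, t + a, t + b ≥ 0` and takes every value `≥ 0` there, so `ρ` induces a bijection on the
orbit space. Bounding `ρ` bounds the cubic, hence `t`, hence `z`: `ρ` is proper, so the induced
continuous bijection is closed, i.e. a homeomorphism.
-/
section Cubic

variable {a b : ℝ}

def cubic (a b t : ℝ) : ℝ := t * (t + a) * (t + b)

def cubicDomain (a b : ℝ) : Set ℝ := {t | 0 ≤ t ∧ 0 ≤ t + a ∧ 0 ≤ t + b}

lemma cubic_strictMonoOn : StrictMonoOn (cubic a b) (cubicDomain a b) := by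
  rintro t ⟨ht, hta, htb⟩ s - hts
  have hs : 0 < s := ht.trans_lt hts
  have hsa : 0 < s + a := hta.trans_lt (by linarith)
  unfold cubic
  gcongr ?_ * ?_
  · exact mul_lt_mul'' hts (by linarith) ht hta
  · linarith

lemma le_cubic {t : ℝ} (ht : 0 ≤ t) (ha : 1 ≤ t + a) (hb : 1 ≤ t + b) : t ≤ cubic a b t := by
  have : 1 ≤ (t + a) * (t + b) := by nlinarith
  unfold cubic
  rw [mul_assoc]
  nlinarith

lemma exists_cubic_eq {c : ℝ} (hc : 0 ≤ c) : ∃ t ∈ cubicDomain a b, cubic a b t = c := by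
  set t₀ := max 0 (max (-a) (-b))
  have hat₀ : -a ≤ t₀ := le_max_of_le_right (le_max_left _ _)
  have hbt₀ : -b ≤ t₀ := le_max_of_le_right (le_max_right _ _)
  have h0t₀ : 0 ≤ t₀ := le_max_left _ _
  have hcubic_t₀ : cubic a b t₀ = 0 := by
    have : t₀ = 0 ∨ t₀ = -a ∨ t₀ = -b := (max_choice _ _).imp_right fun h ↦
      (max_choice (-a) (-b)).imp h.trans h.trans
    rcases this with h | h | h <;> simp [cubic, h]
  have hT : c ≤ cubic a b (t₀ + c + 1) :=
    (by linarith : c ≤ t₀ + c + 1).trans (le_cubic (by positivity) (by linarith) (by linarith))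
  obtain ⟨t, ht, rfl⟩ := intermediate_value_Icc (by linarith : t₀ ≤ t₀ + c + 1)
    (by unfold cubic; fun_prop) ⟨hcubic_t₀ ▸ hc, hT⟩
  exact ⟨t, ⟨h0t₀.trans ht.1, by linarith [ht.1], by linarith [ht.1]⟩, rfl⟩

end Cubic

lemma Complex.exists_circle_mul_eq_of_norm_eq {a b : ℂ} (h : ‖a‖ = ‖b‖) :
    ∃ u : Circle, u * a = b := by
  rcases eq_or_ne a 0 with rfl | ha
  · exact ⟨1, by simpa [eq_comm] using h⟩
  · have hba : ‖b / a‖ = 1 := by rw [norm_div, ← h, div_self (norm_ne_zero_iff.mpr ha)]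
    refine ⟨Circle.exp (b / a).arg, ?_⟩
    rw [Circle.coe_exp, ← one_mul (Complex.exp _), ← Complex.ofReal_one, ← hba,
      Complex.norm_mul_exp_arg_mul_I, div_mul_cancel₀ b ha]

def coordProd (z : ℂ × ℂ × ℂ) : ℂ := z.1 * z.2.1 * z.2.2

noncomputable def circleAct (u v : Circle) (z : ℂ × ℂ × ℂ) : ℂ × ℂ × ℂ :=
  (u * z.1, v * z.2.1, ↑(u * v)⁻¹ * z.2.2)

lemma torusAct_eq_circleAct (θ φ : ℝ) (z : ℂ × ℂ × ℂ) :
    torusAct θ φ z = circleAct (Circle.exp θ) (Circle.exp φ) z := by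
  simp [torusAct, circleAct, ← Circle.exp_add, ← Circle.exp_neg, Circle.coe_exp]

lemma exists_torusAct_eq_circleAct (u v : Circle) (z : ℂ × ℂ × ℂ) :
    ∃ θ φ : ℝ, torusAct θ φ z = circleAct u v z := by
  obtain ⟨θ, rfl⟩ := Circle.exp_surjective u
  obtain ⟨φ, rfl⟩ := Circle.exp_surjective v
  exact ⟨θ, φ, torusAct_eq_circleAct θ φ z⟩

@[simp] lemma coordProd_circleAct (u v : Circle) (z : ℂ × ℂ × ℂ) :
    coordProd (circleAct u v z) = coordProd z := by
  simp only [coordProd, circleAct, Circle.coe_inv, Circle.coe_mul]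
  field_simp

@[simp] lemma norm_circleAct_fst (u v : Circle) (z : ℂ × ℂ × ℂ) :
    ‖(circleAct u v z).1‖ = ‖z.1‖ := by simp [circleAct, Circle.norm_coe]

@[simp] lemma norm_circleAct_snd_fst (u v : Circle) (z : ℂ × ℂ × ℂ) :
    ‖(circleAct u v z).2.1‖ = ‖z.2.1‖ := by simp [circleAct, Circle.norm_coe]

@[simp] lemma norm_circleAct_snd_snd (u v : Circle) (z : ℂ × ℂ × ℂ) :
    ‖(circleAct u v z).2.2‖ = ‖z.2.2‖ := by simp [circleAct, Circle.norm_coe]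

lemma exists_circleAct_eq {z w : ℂ × ℂ × ℂ} (h₁ : ‖z.1‖ = ‖w.1‖) (h₂ : ‖z.2.1‖ = ‖w.2.1‖)
    (h₃ : ‖z.2.2‖ = ‖w.2.2‖) (hp : coordProd z = coordProd w) :
    ∃ u v : Circle, circleAct u v z = w := by
  obtain ⟨u₁, hu₁⟩ := Complex.exists_circle_mul_eq_of_norm_eq h₁
  obtain ⟨u₂, hu₂⟩ := Complex.exists_circle_mul_eq_of_norm_eq h₂
  obtain ⟨u₃, hu₃⟩ := Complex.exists_circle_mul_eq_of_norm_eq h₃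
  obtain ⟨w₁, w₂, w₃⟩ := w
  subst hu₁ hu₂ hu₃
  by_cases hz₁ : z.1 = 0
  · exact ⟨(u₂ * u₃)⁻¹, u₂, by simp [circleAct, hz₁]⟩
  by_cases hz₂ : z.2.1 = 0
  · exact ⟨u₁, (u₁ * u₃)⁻¹, by simp [circleAct, hz₂]⟩
  by_cases hz₃ : z.2.2 = 0
  · exact ⟨u₁, u₂, by simp [circleAct, hz₃]⟩
  have hu : u₁ * u₂ * u₃ = 1 := by
    rw [← Circle.coe_eq_one]
    refine mul_right_cancel₀ (mul_ne_zero (mul_ne_zero hz₁ hz₂) hz₃) ?_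
    simp only [coordProd] at hp
    push_cast
    linear_combination -hp
  refine ⟨u₁, u₂, ?_⟩
  rw [eq_inv_of_mul_eq_one_right hu]
  simp [circleAct]

lemma rhoMap_eq_iff (z : ℂ × ℂ × ℂ) (v : Fin 4 → ℝ) :
    rhoMap z = v ↔ coordProd z = ⟨-v 0, v 3⟩ ∧ ‖z.2.1‖ ^ 2 - ‖z.2.2‖ ^ 2 = 2 * v 1 ∧
      ‖z.1‖ ^ 2 - ‖z.2.2‖ ^ 2 = -2 * v 2 := by
  constructor
  · rintro rfl
    refine ⟨Complex.ext ?_ ?_, ?_, ?_⟩ <;> simp [rhoMap, coordProd] <;> ring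
  · rintro ⟨hp, h₁, h₂⟩
    funext i
    fin_cases i <;> simp [rhoMap, show z.1 * z.2.1 * z.2.2 = ⟨-v 0, v 3⟩ from hp] <;> linarith

lemma rhoMap_torusAct (θ φ : ℝ) (z : ℂ × ℂ × ℂ) : rhoMap (torusAct θ φ z) = rhoMap z := by
  rw [torusAct_eq_circleAct, rhoMap_eq_iff]
  simpa using (rhoMap_eq_iff z _).1 rfl

lemma norm_coordProd_sq (z : ℂ × ℂ × ℂ) :
    ‖coordProd z‖ ^ 2 =
      cubic (‖z.1‖ ^ 2 - ‖z.2.2‖ ^ 2) (‖z.2.1‖ ^ 2 - ‖z.2.2‖ ^ 2) (‖z.2.2‖ ^ 2) := by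
  simp only [coordProd, cubic, norm_mul]
  ring

lemma norm_sq_mem_cubicDomain (z : ℂ × ℂ × ℂ) :
    ‖z.2.2‖ ^ 2 ∈ cubicDomain (‖z.1‖ ^ 2 - ‖z.2.2‖ ^ 2) (‖z.2.1‖ ^ 2 - ‖z.2.2‖ ^ 2) := by
  simp only [cubicDomain, Set.mem_ofPred_eq, add_sub_cancel]
  exact ⟨by positivity, by positivity, by positivity⟩

lemma exists_torusAct_eq_of_rhoMap_eq {z w : ℂ × ℂ × ℂ} (h : rhoMap z = rhoMap w) :
    ∃ θ φ : ℝ, w = torusAct θ φ z := by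
  obtain ⟨hpz, hbz, haz⟩ := (rhoMap_eq_iff z _).1 h
  obtain ⟨hpw, hbw, haw⟩ := (rhoMap_eq_iff w _).1 rfl
  have hp : coordProd z = coordProd w := hpz.trans hpw.symm
  have hw := norm_sq_mem_cubicDomain w
  have hcubic := norm_coordProd_sq w
  rw [haw, hbw, ← haz, ← hbz] at hw hcubic
  have h₃ : ‖z.2.2‖ ^ 2 = ‖w.2.2‖ ^ 2 := cubic_strictMonoOn.injOn (norm_sq_mem_cubicDomain z) hw
    ((norm_coordProd_sq z).symm.trans (hp ▸ hcubic))
  obtain ⟨u, v, huv⟩ := exists_circleAct_eq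
    ((sq_eq_sq₀ (norm_nonneg _) (norm_nonneg _)).1 (by linarith))
    ((sq_eq_sq₀ (norm_nonneg _) (norm_nonneg _)).1 (by linarith))
    ((sq_eq_sq₀ (norm_nonneg _) (norm_nonneg _)).1 h₃) hp
  obtain ⟨θ, φ, hθφ⟩ := exists_torusAct_eq_circleAct u v z
  exact ⟨θ, φ, huv ▸ hθφ.symm⟩

lemma rhoMap_surjective : Function.Surjective rhoMap := by
  intro v
  set p : ℂ := ⟨-v 0, v 3⟩
  set a := -2 * v 2
  set b := 2 * v 1
  obtain ⟨t, ⟨ht, hta, htb⟩, hcubic⟩ := exists_cubic_eq (a := a) (b := b) (sq_nonneg ‖p‖)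
  have hp : √(t + a) * √(t + b) * √t = ‖p‖ := by
    rw [← sq_eq_sq₀ (by positivity) (norm_nonneg _), ← hcubic]
    simp only [mul_pow, Real.sq_sqrt, ht, hta, htb, cubic]
    ring
  refine ⟨(√(t + a), √(t + b), √t * Complex.exp (p.arg * Complex.I)),
    (rhoMap_eq_iff _ _).2 ⟨?_, ?_, ?_⟩⟩
  · calc coordProd _ = ((√(t + a) * √(t + b) * √t : ℝ) : ℂ) * Complex.exp (p.arg * Complex.I) := by
          simp only [coordProd]; push_cast; ring
      _ = p := by rw [hp, Complex.norm_mul_exp_arg_mul_I]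
  · simp [Complex.norm_exp_ofReal_mul_I, Real.sq_sqrt, ht, htb]
    ring
  · simp [Complex.norm_exp_ofReal_mul_I, Real.sq_sqrt, ht, hta]
    ring

lemma continuous_rhoMap : Continuous rhoMap := by
  refine continuous_pi fun i => ?_
  fin_cases i <;> simp only [rhoMap] <;> simp <;> fun_prop

lemma norm_le_of_norm_rhoMap_le {z : ℂ × ℂ × ℂ} {M : ℝ} (h : ‖rhoMap z‖ ≤ M) :
    ‖z‖ ≤ 2 * M ^ 2 + 4 * M + 1 := by
  have hρ : ∀ i, |rhoMap z i| ≤ M := fun i => (norm_le_pi_norm _ i).trans h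
  obtain ⟨hp, hb, ha⟩ := (rhoMap_eq_iff z _).1 rfl
  have hp2 : ‖coordProd z‖ ^ 2 ≤ 2 * M ^ 2 := by
    rw [hp, ← Complex.normSq_eq_norm_sq, Complex.normSq_mk]
    nlinarith [abs_le.1 (hρ 0), abs_le.1 (hρ 3)]
  have h₁ := abs_le.1 (hρ 1)
  have h₂ := abs_le.1 (hρ 2)
  have h₃ : ‖z.2.2‖ ^ 2 ≤ 2 * M ^ 2 + 2 * M + 1 := by
    by_cases ht : ‖z.2.2‖ ^ 2 ≤ 2 * M + 1
    · nlinarith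
    · have := le_cubic (a := ‖z.1‖ ^ 2 - ‖z.2.2‖ ^ 2) (b := ‖z.2.1‖ ^ 2 - ‖z.2.2‖ ^ 2)
        (sq_nonneg ‖z.2.2‖) (by linarith) (by linarith)
      linarith [norm_coordProd_sq z]
  have hle : ∀ x : ℂ, ‖x‖ ^ 2 ≤ 2 * M ^ 2 + 4 * M + 1 → ‖x‖ ≤ 2 * M ^ 2 + 4 * M + 1 :=
    fun x hx => by nlinarith [norm_nonneg x]
  simp only [Prod.norm_def, max_le_iff]
  exact ⟨hle _ (by linarith), hle _ (by linarith), hle _ (by linarith)⟩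

lemma isProperMap_rhoMap : IsProperMap rhoMap := by
  refine isProperMap_iff_isCompact_preimage.2 ⟨continuous_rhoMap, fun K hK => ?_⟩
  obtain ⟨M, hM⟩ := hK.isBounded.subset_closedBall 0
  refine (isCompact_closedBall 0 (2 * M ^ 2 + 4 * M + 1)).of_isClosed_subset
    (hK.isClosed.preimage continuous_rhoMap) fun z hz => ?_
  simpa using norm_le_of_norm_rhoMap_le (by simpa using hM hz)

/-- `ρ` is `T²`-invariant and induces a homeomorphism `ℂ³/T² → ℝ⁴`. -/
theorem rho_invariant_and_induces_homeomorph :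
    (∀ (θ φ : ℝ) (z : ℂ × ℂ × ℂ), rhoMap (torusAct θ φ z) = rhoMap z) ∧
    ∃ h : Quotient torusSetoid ≃ₜ (Fin 4 → ℝ),
      ∀ z : ℂ × ℂ × ℂ, h (Quotient.mk torusSetoid z) = rhoMap z := by
  refine ⟨rhoMap_torusAct, ?_⟩
  let F : Quotient torusSetoid → (Fin 4 → ℝ) :=
    Quotient.lift rhoMap fun z _ ⟨θ, φ, hw⟩ => hw ▸ (rhoMap_torusAct θ φ z).symm
  have hF : Function.Bijective F :=
    ⟨fun x y => Quotient.inductionOn₂ x y fun _ _ h =>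
      Quotient.sound (exists_torusAct_eq_of_rhoMap_eq h),
      Function.Surjective.of_comp (g := Quotient.mk _) rhoMap_surjective⟩
  have hF_closed : IsClosedMap F := IsClosedMap.of_comp_surjective Quotient.mk_surjective
    continuous_quotient_mk' isProperMap_rhoMap.isClosedMap
  exact ⟨(Equiv.ofBijective F hF).toHomeomorphOfContinuousClosed
    (continuous_rhoMap.quotient_lift _) hF_closed, fun _ => rfl⟩
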